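/- For any positive integer t: if A_4(6t+4, 6, [2,1,1]) equals the upper bound ⌊((6t+4)/2)⌊(6t+3)/3⌋⌋ = (3t+2)(2t+1), then A_4(6t+3, 6, [2,1,1]) equals its upper bound ⌊((6t+3)/2)⌊(6t+2)/3⌋⌋ = 6t²+3t. -/

import Mathlib

/-!
Every codeword has weight 4, and two codewords with the entry 1 at the same coordinate share no
other nonzero coordinate, since otherwise their distance would be at most 5. Hence a coordinate
carries at most `⌊(n - 1) / 3⌋` ones, and counting the `2|C|` ones gives
`2|C| ≤ n ⌊(n - 1) / 3⌋`, i.e. `|C| ≤ 6t² + 3t` for `n = 6t + 3`.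
Conversely, an optimal code of length `6t + 4` has `4 (3t + 2)(2t + 1) = (6t + 4)(4t + 2)` nonzero
entries, so some coordinate carries at most `4t + 2` of them; dropping that coordinate and the
codewords nonzero there leaves a code of length `6t + 3` with at least `6t² + 3t` words.
-/

open Finset

/-- `u` has composition `w̄`: for each nonzero symbol `j`, exactly `w j` coordinates equal `j`. -/
def HasComposition {q : ℕ} {X : Type*} [Fintype X] [DecidableEq X]
    (w : ZMod q → ℕ) (u : X → ZMod q) : Prop :=
  ∀ j : ZMod q, j ≠ 0 → (Finset.univ.filter fun x => u x = j).card = w j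

/-- A constant-composition code with composition `w̄` and minimum distance `d`. -/
def IsCCCode (q d : ℕ) (w : ZMod q → ℕ) {X : Type*} [Fintype X] [DecidableEq X]
    (C : Finset (X → ZMod q)) : Prop :=
  (∀ u ∈ C, HasComposition w u) ∧
  ∀ u ∈ C, ∀ v ∈ C, u ≠ v → d ≤ hammingDist u v

/-- `A_q(n,d,w̄)`: the maximum size of an `(n,d,w̄)_q` constant-composition code. -/
noncomputable def maxCCC (q n d : ℕ) (w : ZMod q → ℕ) : ℕ :=
  sSup {s | ∃ C : Finset (Fin n → ZMod q), IsCCCode q d w C ∧ C.card = s}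

/-- The composition `[2,1,1]` for quaternary codes: two 1's, one 2, one 3. -/
def w211 : ZMod 4 → ℕ :=
  fun j => if j = 1 then 2 else if j = 2 then 1 else if j = 3 then 1 else 0

section ConstantWeight

variable {X M : Type*} [Fintype X] [DecidableEq X] [Zero M] [DecidableEq M]

local notation "supp " u:max => Finset.univ.filter fun z => u z ≠ 0

lemma hammingDist_le_card_support_union_erase {u v : X → M} {x : X} (hx : u x = v x) :
    hammingDist u v ≤ #((supp u ∪ supp v).erase x) := by
  refine card_le_card fun z hz => ?_
  simp only [mem_filter, mem_univ, true_and] at hz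
  simp only [mem_erase, mem_union, mem_filter, mem_univ, true_and]
  refine ⟨fun hzx => hz (hzx ▸ hx), ?_⟩
  by_contra! h
  exact hz (h.1.trans h.2.symm)

lemma disjoint_support_erase_of_apply_eq {k : ℕ} {u v : X → M} {x : X}
    (hu : hammingNorm u = k) (hv : hammingNorm v = k) (hd : 2 * k - 2 ≤ hammingDist u v)
    (hx : u x = v x) (hx0 : u x ≠ 0) :
    Disjoint ((supp u).erase x) ((supp v).erase x) := by
  rw [disjoint_left]
  intro y hyu hyv
  simp only [mem_erase, mem_filter, mem_univ, true_and] at hyu hyv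
  have hxy : ({x, y} : Finset X) ⊆ supp u ∩ supp v := by
    intro z hz
    simp only [mem_insert, mem_singleton] at hz
    rcases hz with rfl | rfl <;> simp [hx0, ← hx, hyu.2, hyv.2]
  have hinter := card_le_card hxy
  rw [card_pair (Ne.symm hyu.1)] at hinter
  have hunion := card_union_add_card_inter (supp u) (supp v)
  have hxmem : x ∈ supp u ∪ supp v := by simp [hx0]
  have hdist := hammingDist_le_card_support_union_erase hx
  rw [card_erase_of_mem hxmem] at hdist
  have := card_pos.2 ⟨x, hxmem⟩
  change #(supp u) = k at hu
  change #(supp v) = k at hv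
  omega

lemma mul_card_filter_apply_eq_le {k : ℕ} {C : Finset (X → M)}
    (hw : ∀ u ∈ C, hammingNorm u = k)
    (hd : ∀ u ∈ C, ∀ v ∈ C, u ≠ v → 2 * k - 2 ≤ hammingDist u v) (x : X) {a : M} (ha : a ≠ 0) :
    (k - 1) * #{u ∈ C | u x = a} ≤ Fintype.card X - 1 := by
  set G := {u ∈ C | u x = a}
  have hcard : #(G.biUnion fun u => (supp u).erase x) = (k - 1) * #G := by
    rw [card_biUnion, sum_const_nat, mul_comm]
    · intro u hu
      rw [mem_filter] at hu
      rw [card_erase_of_mem (by simp [hu.2, ha]), ← hammingNorm, hw u hu.1]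
    · intro u hu v hv huv
      rw [coe_filter] at hu hv
      exact disjoint_support_erase_of_apply_eq (hw u hu.1) (hw v hv.1) (hd u hu.1 v hv.1 huv)
        (hu.2.trans hv.2.symm) (hu.2 ▸ ha)
  have hsub : (G.biUnion fun u => (supp u).erase x) ⊆ univ.erase x := by
    simp only [biUnion_subset]
    exact fun u _ => erase_subset_erase x (subset_univ _)
  rw [← hcard, ← card_univ, ← card_erase_of_mem (mem_univ x)]
  exact card_le_card hsub

end ConstantWeight

section ConstantComposition

variable {q d : ℕ} {w : ZMod q → ℕ} {X : Type*} [Fintype X] [DecidableEq X]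

lemma HasComposition.hammingNorm_eq [NeZero q] {u : X → ZMod q} (hu : HasComposition w u) :
    hammingNorm u = ∑ j ∈ univ.erase 0, w j := by
  rw [hammingNorm, card_eq_sum_card_fiberwise (f := u) (t := univ.erase 0) (by simp [Set.MapsTo])]
  refine sum_congr rfl fun j hj => ?_
  rw [← hu j (ne_of_mem_erase hj), filter_filter]
  congr 1
  ext z
  simp only [mem_filter, mem_univ, true_and, and_iff_right_iff_imp]
  exact fun h => h ▸ ne_of_mem_erase hj

lemma IsCCCode.sum_card_filter_apply_eq {C : Finset (X → ZMod q)} (hC : IsCCCode q d w C)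
    {j : ZMod q} (hj : j ≠ 0) : ∑ x, #{u ∈ C | u x = j} = w j * #C := by
  have := sum_card_bipartiteAbove_eq_sum_card_bipartiteBelow (s := univ) (t := C)
    (fun x u => u x = j)
  simp only [bipartiteAbove, bipartiteBelow] at this
  rw [this, sum_const_nat fun u hu => hC.1 u hu j hj, mul_comm]

lemma IsCCCode.sum_card_filter_apply_ne_zero [NeZero q] {C : Finset (X → ZMod q)}
    (hC : IsCCCode q d w C) : ∑ x, #{u ∈ C | u x ≠ 0} = (∑ j ∈ univ.erase 0, w j) * #C := by
  have := sum_card_bipartiteAbove_eq_sum_card_bipartiteBelow (s := univ) (t := C)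
    (fun x u => u x ≠ 0)
  simp only [bipartiteAbove, bipartiteBelow] at this
  rw [this, mul_comm]
  exact sum_const_nat fun u hu => (hC.1 u hu).hammingNorm_eq

end ConstantComposition

section Shortening

variable {q d n : ℕ} {w : ZMod q → ℕ}

lemma card_filter_succAbove (x : Fin (n + 1)) {p : Fin (n + 1) → Prop} [DecidablePred p]
    (hx : ¬ p x) : #{i : Fin n | p (x.succAbove i)} = #{z | p z} := by
  refine card_nbij x.succAbove (fun i hi => by simpa using hi) (x.succAbove_right_injective.injOn)
    fun z hz => ?_
  simp only [coe_filter, mem_univ, true_and] at hz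
  obtain ⟨i, rfl⟩ := Fin.exists_succAbove_eq (ne_of_apply_ne p fun h => hx (h ▸ hz))
  exact ⟨i, by simpa using hz, rfl⟩

lemma IsCCCode.shorten {C : Finset (Fin (n + 1) → ZMod q)} (hC : IsCCCode q d w C)
    (x : Fin (n + 1)) : IsCCCode q d w ({u ∈ C | u x = 0}.image x.removeNth) := by
  simp only [IsCCCode, forall_mem_image, mem_filter]
  refine ⟨fun u hu j hj => ?_, fun u hu v hv huv => ?_⟩
  · rw [← hC.1 u hu.1 j hj]
    exact card_filter_succAbove x (p := fun z => u z = j) (by simpa [hu.2] using hj.symm)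
  · have hne : u ≠ v := fun h => huv (h ▸ rfl)
    refine (hC.2 u hu.1 v hv.1 hne).trans_eq ?_
    exact (card_filter_succAbove x (p := fun z => u z ≠ v z) (by simp [hu.2, hv.2])).symm

lemma removeNth_injOn_apply_eq_zero {M : Type*} [Zero M] (x : Fin (n + 1)) :
    Set.InjOn x.removeNth {u : Fin (n + 1) → M | u x = 0} := by
  intro u (hu : u x = 0) v (hv : v x = 0) huv
  rw [← Fin.insertNth_self_removeNth x u, ← Fin.insertNth_self_removeNth x v, huv, hu, hv]

end Shortening

section MaxCCC

variable {q n d : ℕ} {w : ZMod q → ℕ}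

lemma bddAbove_card_isCCCode [NeZero q] :
    BddAbove {s | ∃ C : Finset (Fin n → ZMod q), IsCCCode q d w C ∧ #C = s} :=
  ⟨Fintype.card (Fin n → ZMod q), by rintro s ⟨C, -, rfl⟩; exact card_le_univ C⟩

lemma nonempty_card_isCCCode :
    {s | ∃ C : Finset (Fin n → ZMod q), IsCCCode q d w C ∧ #C = s}.Nonempty :=
  ⟨0, ∅, by simp [IsCCCode], rfl⟩

lemma le_maxCCC [NeZero q] {C : Finset (Fin n → ZMod q)} (hC : IsCCCode q d w C) :
    #C ≤ maxCCC q n d w :=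
  le_csSup bddAbove_card_isCCCode ⟨C, hC, rfl⟩

lemma maxCCC_le {b : ℕ} (hb : ∀ C : Finset (Fin n → ZMod q), IsCCCode q d w C → #C ≤ b) :
    maxCCC q n d w ≤ b :=
  csSup_le nonempty_card_isCCCode <| by rintro _ ⟨C, hC, rfl⟩; exact hb C hC

lemma exists_isCCCode_card_eq_maxCCC [NeZero q] :
    ∃ C : Finset (Fin n → ZMod q), IsCCCode q d w C ∧ #C = maxCCC q n d w :=
  Nat.sSup_mem nonempty_card_isCCCode bddAbove_card_isCCCode

lemma IsCCCode.card_sub_card_filter_apply_ne_zero_le_maxCCC [NeZero q]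
    {C : Finset (Fin (n + 1) → ZMod q)} (hC : IsCCCode q d w C) (x : Fin (n + 1)) :
    #C - #{u ∈ C | u x ≠ 0} ≤ maxCCC q n d w := by
  have hsplit : #{u ∈ C | u x = 0} + #{u ∈ C | u x ≠ 0} = #C :=
    card_filter_add_card_filter_not _
  calc #C - #{u ∈ C | u x ≠ 0} = #{u ∈ C | u x = 0} := by omega
    _ = #({u ∈ C | u x = 0}.image x.removeNth) :=
      (card_image_of_injOn fun u hu v hv =>
        removeNth_injOn_apply_eq_zero x (mem_filter.1 hu).2 (mem_filter.1 hv).2).symm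
    _ ≤ maxCCC q n d w := le_maxCCC (hC.shorten x)

end MaxCCC

section Composition211

variable {X : Type*} [Fintype X] [DecidableEq X]

lemma HasComposition.hammingNorm_eq_four {u : X → ZMod 4} (hu : HasComposition w211 u) :
    hammingNorm u = 4 := by
  rw [hu.hammingNorm_eq]
  rfl

variable {C : Finset (X → ZMod 4)}

lemma IsCCCode.sum_card_filter_apply_ne_zero_eq_four_mul (hC : IsCCCode 4 6 w211 C) :
    ∑ x, #{u ∈ C | u x ≠ 0} = 4 * #C := by
  have hweight : ∑ j ∈ univ.erase (0 : ZMod 4), w211 j = 4 := by decide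
  rw [hC.sum_card_filter_apply_ne_zero, hweight]

lemma IsCCCode.three_mul_card_filter_apply_eq_one_le (hC : IsCCCode 4 6 w211 C) (x : X) :
    3 * #{u ∈ C | u x = 1} ≤ Fintype.card X - 1 :=
  mul_card_filter_apply_eq_le (k := 4) (fun u hu => (hC.1 u hu).hammingNorm_eq_four) hC.2 x
    (by decide)

lemma IsCCCode.two_mul_card_le (hC : IsCCCode 4 6 w211 C) :
    2 * #C ≤ Fintype.card X * ((Fintype.card X - 1) / 3) :=
  calc 2 * #C = ∑ x, #{u ∈ C | u x = 1} :=
        (hC.sum_card_filter_apply_eq (j := 1) (by decide)).symm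
    _ ≤ ∑ _x : X, (Fintype.card X - 1) / 3 := sum_le_sum fun x _ =>
      (Nat.le_div_iff_mul_le three_pos).2 ((mul_comm _ _).trans_le
        (hC.three_mul_card_filter_apply_eq_one_le x))
    _ = Fintype.card X * ((Fintype.card X - 1) / 3) := by rw [sum_const, card_univ, smul_eq_mul]

end Composition211

theorem maxCCC_six_t_add_three_of_six_t_add_four_general (t : ℕ)
    (h : maxCCC 4 (6 * t + 4) 6 w211 = (3 * t + 2) * (2 * t + 1)) :
    maxCCC 4 (6 * t + 3) 6 w211 = 6 * t ^ 2 + 3 * t := by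
  have hsize : (3 * t + 2) * (2 * t + 1) = 6 * t ^ 2 + 3 * t + (4 * t + 2) := by ring
  refine le_antisymm (maxCCC_le fun C hC => ?_) ?_
  · have hbound := hC.two_mul_card_le
    rw [Fintype.card_fin, show (6 * t + 3 - 1) / 3 = 2 * t by omega] at hbound
    linarith
  · obtain ⟨D, hD, hDcard⟩ :=
      exists_isCCCode_card_eq_maxCCC (q := 4) (n := 6 * t + 3 + 1) (d := 6) (w := w211)
    obtain ⟨x, -, hx⟩ := exists_le_of_sum_le univ_nonempty
      (f := fun x => #{u ∈ D | u x ≠ 0}) (g := fun _ => 4 * t + 2) <| by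
        rw [hD.sum_card_filter_apply_ne_zero_eq_four_mul, hDcard, h, sum_const, card_univ,
          Fintype.card_fin, smul_eq_mul]
        exact le_of_eq (by ring)
    have hshort := hD.card_sub_card_filter_apply_ne_zero_le_maxCCC x
    rw [hDcard, h] at hshort
    omega

/-- Shortening: if `A_4(6t+4,6,[2,1,1]) = (3t+2)(2t+1)` meets its upper bound,
then `A_4(6t+3,6,[2,1,1]) = 6t²+3t` meets its upper bound. -/
theorem maxCCC_six_t_add_three_of_six_t_add_four (t : ℕ) (ht : 1 ≤ t)
    (h : maxCCC 4 (6 * t + 4) 6 w211 = (3 * t + 2) * (2 * t + 1)) :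
    maxCCC 4 (6 * t + 3) 6 w211 = 6 * t ^ 2 + 3 * t :=
  maxCCC_six_t_add_three_of_six_t_add_four_general t h
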